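/- For every positive integer n, the number of 2-Motzkin paths of length n−1 equals the Catalan number C_n. -/

import Mathlib

/-- Steps of a 2-Motzkin path: up, down, and two kinds of level steps. -/
inductive MStep : Type
  | up | down | straight | wavy
deriving DecidableEq

/-- The vertical displacement of a 2-Motzkin step. -/
def mval : MStep → ℤ
  | .up => 1
  | .down => -1
  | .straight => 0
  | .wavy => 0

/-- The level (y-coordinate) of the path `p` after `k` steps. -/
def mlvl (p : List MStep) (k : ℕ) : ℤ := ((p.take k).map mval).sum

/-- `p` is a 2-Motzkin path: it ends on the x-axis and never goes below it. -/
def IsMotzkin2 (p : List MStep) : Prop :=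
  mlvl p p.length = 0 ∧ ∀ k ≤ p.length, 0 ≤ mlvl p k

/-!
Binary trees with `n` nodes are counted by `C_n`. Below the root, record each node by its
children: a left child only gives a straight step, a right child only a wavy step, and children
`l`, `r` give `up`, the path of `l`, `down`, the path of `r`. Splitting a path `up :: q` at the
first point where `q` dips below its starting level inverts this, so the encoding is a
bijection from trees with `n` nodes onto 2-Motzkin paths of length `n - 1`.
-/

@[simp] lemma mlvl_zero (p : List MStep) : mlvl p 0 = 0 := rfl

@[simp] lemma mlvl_nil (k : ℕ) : mlvl [] k = 0 := by
  simp [mlvl]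

@[simp] lemma mlvl_cons_succ (s : MStep) (p : List MStep) (k : ℕ) :
    mlvl (s :: p) (k + 1) = mval s + mlvl p k := by
  simp [mlvl]

lemma mlvl_append_of_le {a : List MStep} (b : List MStep) {k : ℕ} (h : k ≤ a.length) :
    mlvl (a ++ b) k = mlvl a k := by
  simp [mlvl, List.take_append_of_le_length h]

lemma mlvl_append_length_add (a b : List MStep) (k : ℕ) :
    mlvl (a ++ b) (a.length + k) = mlvl a a.length + mlvl b k := by
  simp [mlvl, List.take_append, List.take_of_length_le]

lemma mlvl_of_length_le {p : List MStep} {k : ℕ} (h : p.length ≤ k) :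
    mlvl p k = mlvl p p.length := by
  simp [mlvl, List.take_of_length_le h]

lemma isMotzkin2_iff {p : List MStep} :
    IsMotzkin2 p ↔ mlvl p p.length = 0 ∧ ∀ k, 0 ≤ mlvl p k := by
  refine and_congr_right fun hend => ⟨fun h k => ?_, fun h k _ => h k⟩
  rcases le_total k p.length with hk | hk
  · exact h k hk
  · rw [mlvl_of_length_le hk, hend]

lemma isMotzkin2_nil : IsMotzkin2 [] := by
  simp [isMotzkin2_iff]

lemma isMotzkin2_cons_iff_of_mval_eq_zero {s : MStep} {p : List MStep} (hs : mval s = 0) :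
    IsMotzkin2 (s :: p) ↔ IsMotzkin2 p := by
  simp only [isMotzkin2_iff, List.length_cons, mlvl_cons_succ, hs, zero_add]
  refine and_congr_right fun _ => ⟨fun h k => by simpa [hs] using h (k + 1), fun h k => ?_⟩
  cases k <;> simp [hs, h]

lemma not_isMotzkin2_down_cons (p : List MStep) : ¬ IsMotzkin2 (.down :: p) := by
  intro h
  have := isMotzkin2_iff.1 h |>.2 1
  simp [mval] at this

lemma IsMotzkin2.up_append_down {a b : List MStep} (ha : IsMotzkin2 a) (hb : IsMotzkin2 b) :
    IsMotzkin2 (.up :: (a ++ .down :: b)) := by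
  rw [isMotzkin2_iff] at ha hb ⊢
  have hmid (k : ℕ) : mlvl (a ++ .down :: b) (a.length + k) = mlvl (.down :: b) k := by
    rw [mlvl_append_length_add, ha.1, zero_add]
  refine ⟨?_, fun k => ?_⟩
  · rw [List.length_cons, mlvl_cons_succ, List.length_append, hmid, List.length_cons,
      mlvl_cons_succ, hb.1]
    rfl
  rcases k with _ | j
  · rfl
  rw [mlvl_cons_succ]
  rcases le_or_gt j a.length with hj | hj
  · rw [mlvl_append_of_le _ hj]
    linarith [ha.2 j, show mval .up = 1 from rfl]
  obtain ⟨i, rfl⟩ := Nat.exists_eq_add_of_lt hj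
  rw [add_assoc, hmid, mlvl_cons_succ]
  linarith [hb.2 i, show mval .up = 1 from rfl, show mval .down = -1 from rfl]

/-- Steps descend by at most one, so a path dipping below `-c` first reaches `-c` right
before a down step. -/
lemma exists_eq_append_down_of_mlvl_lt (q : List MStep) {c : ℤ} (hc : 0 ≤ c)
    (h : ∃ k, mlvl q k < -c) :
    ∃ a b, q = a ++ .down :: b ∧ mlvl a a.length = -c ∧ ∀ k, -c ≤ mlvl a k := by
  induction q generalizing c with
  | nil => simp at h; omega
  | cons s q ih =>
    obtain ⟨_ | k, hk⟩ := h
    · simp at hk; omega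
    rw [mlvl_cons_succ] at hk
    by_cases hbase : s = .down ∧ c = 0
    · obtain ⟨rfl, rfl⟩ := hbase
      exact ⟨[], q, rfl, rfl, by simp⟩
    have hc' : 0 ≤ c + mval s := by
      cases s <;> simp only [mval, reduceCtorEq, false_and, true_and] at hbase ⊢ <;> omega
    obtain ⟨a, b, rfl, hend, hbound⟩ := ih hc' ⟨k, by linarith⟩
    refine ⟨s :: a, b, rfl, by simp [hend], fun k => ?_⟩
    rcases k with _ | k
    · simpa using hc
    · linarith [mlvl_cons_succ s a k, hbound k]

lemma IsMotzkin2.exists_eq_append_down_of_up_cons {q : List MStep} (hp : IsMotzkin2 (.up :: q)) :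
    ∃ a b, q = a ++ .down :: b ∧ IsMotzkin2 a ∧ IsMotzkin2 b := by
  rw [isMotzkin2_iff] at hp
  obtain ⟨hend, hbound⟩ := hp
  rw [List.length_cons] at hend
  have hq (k : ℕ) : mlvl (.up :: q) (k + 1) = 1 + mlvl q k := mlvl_cons_succ _ _ _
  obtain ⟨a, b, rfl, ha, ha'⟩ :=
    exists_eq_append_down_of_mlvl_lt q le_rfl ⟨q.length, by linarith [hq q.length]⟩
  have hb (k : ℕ) : mlvl (.up :: (a ++ .down :: b)) (a.length + (k + 1) + 1) = mlvl b k := by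
    rw [hq, mlvl_append_length_add, ha, mlvl_cons_succ]
    simp [mval]
  refine ⟨a, b, rfl, isMotzkin2_iff.2 ⟨by simpa using ha, by simpa using ha'⟩,
    isMotzkin2_iff.2 ⟨?_, fun k => hb k ▸ hbound _⟩⟩
  rw [← hb, ← hend, List.length_append, List.length_cons]

lemma IsMotzkin2.append_down_inj {a₁ b₁ a₂ b₂ : List MStep} (h₁ : IsMotzkin2 a₁)
    (h₂ : IsMotzkin2 a₂) (h : a₁ ++ .down :: b₁ = a₂ ++ .down :: b₂) : a₁ = a₂ ∧ b₁ = b₂ := by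
  have not_lt {a₁ b₁ a₂ b₂ : List MStep} (h₁ : IsMotzkin2 a₁) (h₂ : IsMotzkin2 a₂)
      (h : a₁ ++ .down :: b₁ = a₂ ++ .down :: b₂) : ¬ a₁.length < a₂.length := by
    intro hlt
    have hdip : mlvl (a₁ ++ .down :: b₁) (a₁.length + 1) = -1 := by
      rw [mlvl_append_length_add, h₁.1, mlvl_cons_succ]
      rfl
    rw [h, mlvl_append_of_le _ hlt] at hdip
    linarith [h₂.2 _ hlt]
  have hlen : a₁.length = a₂.length := by
    have := not_lt h₁ h₂ h
    have := not_lt h₂ h₁ h.symm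
    omega
  simpa using List.append_inj h hlen

namespace BinaryTree

theorem numNodes_eq_zero_iff {α : Type*} {t : BinaryTree α} : t.numNodes = 0 ↔ t = nil := by
  cases t <;> simp

def toMotzkin2Path : BinaryTree Unit → List MStep
  | nil => []
  | node _ nil nil => []
  | node _ (node a l r) nil => .straight :: toMotzkin2Path (node a l r)
  | node _ nil (node a l r) => .wavy :: toMotzkin2Path (node a l r)
  | node _ (node a l r) (node a' l' r') =>
      .up :: (toMotzkin2Path (node a l r) ++ .down :: toMotzkin2Path (node a' l' r'))

theorem isMotzkin2_toMotzkin2Path : ∀ t : BinaryTree Unit, IsMotzkin2 t.toMotzkin2Path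
  | nil | node _ nil nil => isMotzkin2_nil
  | node _ (node a l r) nil =>
      (isMotzkin2_cons_iff_of_mval_eq_zero rfl).2 (isMotzkin2_toMotzkin2Path (node a l r))
  | node _ nil (node a l r) =>
      (isMotzkin2_cons_iff_of_mval_eq_zero rfl).2 (isMotzkin2_toMotzkin2Path (node a l r))
  | node _ (node _ _ _) (node _ _ _) =>
      (isMotzkin2_toMotzkin2Path _).up_append_down (isMotzkin2_toMotzkin2Path _)

theorem length_toMotzkin2Path : ∀ t : BinaryTree Unit, t.toMotzkin2Path.length = t.numNodes - 1
  | nil | node _ nil nil => rfl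
  | node _ (node a l r) nil | node _ nil (node a l r) => by
      have := length_toMotzkin2Path (node a l r)
      simp only [toMotzkin2Path, List.length_cons, numNodes] at this ⊢
      omega
  | node _ (node a l r) (node a' l' r') => by
      have := length_toMotzkin2Path (node a l r)
      have := length_toMotzkin2Path (node a' l' r')
      simp only [toMotzkin2Path, List.length_cons, List.length_append, numNodes] at *
      omega

theorem toMotzkin2Path_inj : ∀ {s t : BinaryTree Unit}, s ≠ nil → t ≠ nil →
    s.toMotzkin2Path = t.toMotzkin2Path → s = t
  | node () l r, node () l' r', _, _, h => by
    cases l <;> cases r <;> cases l' <;> cases r' <;>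
      simp only [toMotzkin2Path, reduceCtorEq, List.cons.injEq, true_and, false_and] at h ⊢
    · rw [toMotzkin2Path_inj (by simp) (by simp) h]
    · rw [toMotzkin2Path_inj (by simp) (by simp) h]
    · obtain ⟨hl, hr⟩ := (isMotzkin2_toMotzkin2Path _).append_down_inj
        (isMotzkin2_toMotzkin2Path _) h
      rw [toMotzkin2Path_inj (by simp) (by simp) hl, toMotzkin2Path_inj (by simp) (by simp) hr]

theorem exists_toMotzkin2Path_eq : ∀ {p : List MStep}, IsMotzkin2 p →
    ∃ t ≠ nil, t.toMotzkin2Path = p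
  | [], _ => ⟨node () nil nil, by simp, rfl⟩
  | .straight :: q, hp => by
    obtain ⟨_ | ⟨a, l, r⟩, ht, rfl⟩ :=
      exists_toMotzkin2Path_eq ((isMotzkin2_cons_iff_of_mval_eq_zero rfl).1 hp)
    · exact absurd rfl ht
    · exact ⟨node () (node a l r) nil, by simp, rfl⟩
  | .wavy :: q, hp => by
    obtain ⟨_ | ⟨a, l, r⟩, ht, rfl⟩ :=
      exists_toMotzkin2Path_eq ((isMotzkin2_cons_iff_of_mval_eq_zero rfl).1 hp)
    · exact absurd rfl ht
    · exact ⟨node () nil (node a l r), by simp, rfl⟩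
  | .down :: q, hp => (not_isMotzkin2_down_cons q hp).elim
  | .up :: q, hp => by
    obtain ⟨a, b, rfl, ha, hb⟩ := hp.exists_eq_append_down_of_up_cons
    obtain ⟨_ | ⟨v, l, r⟩, hl, rfl⟩ := exists_toMotzkin2Path_eq ha
    · exact absurd rfl hl
    obtain ⟨_ | ⟨v', l', r'⟩, hr, rfl⟩ := exists_toMotzkin2Path_eq hb
    · exact absurd rfl hr
    exact ⟨node () (node v l r) (node v' l' r'), by simp, rfl⟩
termination_by p => p.length
decreasing_by all_goals subst_vars; simp <;> omega

theorem bijOn_toMotzkin2Path (n : ℕ) :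
    Set.BijOn toMotzkin2Path {t | t.numNodes = n} {p | IsMotzkin2 p ∧ p.length = n - 1} := by
  refine ⟨fun t ht => ⟨isMotzkin2_toMotzkin2Path t, ht ▸ length_toMotzkin2Path t⟩,
    fun s hs t ht h => ?_, fun p ⟨hp, hlen⟩ => ?_⟩
  · rcases n with _ | n
    · rw [Set.mem_ofPred_eq, numNodes_eq_zero_iff] at hs ht
      rw [hs, ht]
    · exact toMotzkin2Path_inj (by rintro rfl; simp at hs) (by rintro rfl; simp at ht) h
  · rcases n with _ | n
    · exact ⟨nil, rfl, (List.length_eq_zero_iff.1 hlen).symm⟩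
    · obtain ⟨t, ht, rfl⟩ := exists_toMotzkin2Path_eq hp
      refine ⟨t, ?_, rfl⟩
      have := length_toMotzkin2Path t
      have := mt numNodes_eq_zero_iff.1 ht
      rw [Set.mem_ofPred_eq]
      omega

end BinaryTree

theorem motzkin2_count_eq_catalan_general (n : ℕ) :
    {p : List MStep | IsMotzkin2 p ∧ p.length = n - 1}.ncard =
      Nat.choose (2 * n) n / (n + 1) := by
  rw [← (BinaryTree.bijOn_toMotzkin2Path n).ncard_eq, ← BinaryTree.coe_treesOfNumNodesEq,
    Set.ncard_coe_finset, BinaryTree.treesOfNumNodesEq_card_eq_catalan,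
    catalan_eq_centralBinom_div]
  rfl

theorem motzkin2_count_eq_catalan (n : ℕ) (hn : 0 < n) :
    {p : List MStep | IsMotzkin2 p ∧ p.length = n - 1}.ncard =
      Nat.choose (2 * n) n / (n + 1) :=
  motzkin2_count_eq_catalan_general n
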